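/- Let A_1,...,A_k be n×n real matrices, p ∈ Δ_k, and suppose P ∈ 𝕊ⁿ is positive definite with Σ_i p_i Aᵢᵀ P Aᵢ − P ≼ −Q for some positive definite Q. Then the linear operator L on symmetric matrices defined by L(M) = Σ_i p_i A_i M A_iᵀ satisfies: for every positive semidefinite M₀, the iterates M_{t+1} = L(M_t) satisfy trace(P M_t) ≤ (1 − λ_min(Q)/λ_max(P))^t · trace(P M₀), and hence M_t → 0. -/

import Mathlib

/-!
`V(M) = tr(P M)` is a Lyapunov function for `L(M) = ∑ pᵢ Aᵢ M Aᵢᵀ`. Since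
`tr(P L(M)) = tr(L*(P) M)` with `L*(P) = ∑ pᵢ Aᵢᵀ P Aᵢ ≼ P - Q`, for psd `M`
`tr(P L(M)) ≤ tr(P M) - λ_min(Q) tr M ≤ (1 - λ_min(Q)/λ_max(P)) tr(P M)`,
using `tr(P M) ≤ λ_max(P) tr M`. Convergence follows because `tr(P M) ≥ λ_min(P) tr M`
and the entries of a psd matrix are bounded by its trace.
-/

open Finset Matrix Filter Topology
open scoped MatrixOrder ComplexOrder

namespace Matrix

variable {n ι 𝕜 R : Type*} [RCLike 𝕜]

lemma le_of_smul_one_le_smul_one [DecidableEq n] [Nonempty n] {a b : ℝ}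
    (h : a • (1 : Matrix n n 𝕜) ≤ b • 1) : a ≤ b := by
  have := (le_iff.mp h).diag_nonneg (i := Classical.arbitrary n)
  rw [← sub_smul, smul_apply, one_apply_eq, RCLike.real_smul_eq_coe_mul, mul_one,
    RCLike.ofReal_nonneg] at this
  linarith

variable [Fintype n]

lemma PosSemidef.trace_mul_nonneg {A B : Matrix n n 𝕜} (hA : A.PosSemidef)
    (hB : B.PosSemidef) : 0 ≤ (A * B).trace := by
  classical
  obtain ⟨X, rfl⟩ := CStarAlgebra.nonneg_iff_eq_star_mul_self.mp hB.nonneg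
  rw [← Matrix.mul_assoc, trace_mul_comm, ← Matrix.mul_assoc, star_eq_conjTranspose]
  exact (hA.mul_mul_conjTranspose_same X).trace_nonneg

lemma trace_mul_le_trace_mul_of_le {A B M : Matrix n n 𝕜} (hAB : A ≤ B)
    (hM : M.PosSemidef) : (A * M).trace ≤ (B * M).trace := by
  have := (le_iff.mp hAB).trace_mul_nonneg hM
  rwa [Matrix.sub_mul, trace_sub, sub_nonneg] at this

lemma PosSemidef.abs_apply_le_trace {M : Matrix n n ℝ} (hM : M.PosSemidef) (i j : n) :
    |M i j| ≤ M.trace := by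
  classical
  have hdiag (l : n) : M l l ≤ M.trace :=
    single_le_sum (f := fun m => M m m) (fun _ _ => hM.diag_nonneg) (mem_univ l)
  have hsymm : M j i = M i j := by simpa using congrFun (congrFun hM.1 i) j
  have hplus := hM.dotProduct_mulVec_nonneg (Pi.single i 1 + Pi.single j 1)
  have hminus := hM.dotProduct_mulVec_nonneg (Pi.single i 1 - Pi.single j 1)
  simp only [star_trivial, mulVec_add, mulVec_sub, mulVec_single, dotProduct_add,
    dotProduct_sub, add_dotProduct, sub_dotProduct, single_dotProduct, one_mul,
    MulOpposite.op_one, one_smul, col_apply] at hplus hminus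
  rw [abs_le]
  constructor <;> linarith [hdiag i, hdiag j]

lemma tendsto_zero_of_trace_tendsto_zero {l : Filter ι} {M : ι → Matrix n n ℝ}
    (hM : ∀ a, (M a).PosSemidef) (htr : Tendsto (fun a => (M a).trace) l (𝓝 0)) :
    Tendsto M l (𝓝 0) :=
  tendsto_pi_nhds.mpr fun i => tendsto_pi_nhds.mpr fun j =>
    squeeze_zero_norm (fun a => (hM a).abs_apply_le_trace i j) htr

section DecidableEq

variable [DecidableEq n]

lemma IsHermitian.le_smul_one {A : Matrix n n 𝕜} (hA : A.IsHermitian) {r : ℝ}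
    (h : ∀ i, hA.eigenvalues i ≤ r) : A ≤ r • 1 := by
  rw [← Algebra.algebraMap_eq_smul_one]
  refine le_algebraMap_of_spectrum_le (fun x hx => ?_) hA
  obtain ⟨i, rfl⟩ := hA.spectrum_real_eq_range_eigenvalues ▸ hx
  exact h i

lemma IsHermitian.smul_one_le {A : Matrix n n 𝕜} (hA : A.IsHermitian) {r : ℝ}
    (h : ∀ i, r ≤ hA.eigenvalues i) : r • 1 ≤ A := by
  rw [← Algebra.algebraMap_eq_smul_one]
  refine algebraMap_le_of_le_spectrum (fun x hx => ?_) hA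
  obtain ⟨i, rfl⟩ := hA.spectrum_real_eq_range_eigenvalues ▸ hx
  exact h i

lemma PosDef.exists_pos_smul_one_le {A : Matrix n n 𝕜} (hA : A.PosDef) :
    ∃ r > 0, (r : ℝ) • 1 ≤ A := by
  cases isEmpty_or_nonempty n
  · exact ⟨1, one_pos, (Subsingleton.elim _ _).le⟩
  obtain ⟨r, hr, h⟩ := (CFC.exists_pos_algebraMap_le_iff hA.isHermitian).mpr fun x hx => by
    obtain ⟨i, rfl⟩ := hA.isHermitian.spectrum_real_eq_range_eigenvalues ▸ hx
    exact hA.eigenvalues_pos i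
  exact ⟨r, hr, by rwa [← Algebra.algebraMap_eq_smul_one]⟩

lemma tendsto_zero_of_trace_mul_tendsto_zero {l : Filter ι} {P : Matrix n n ℝ}
    {M : ι → Matrix n n ℝ} (hP : P.PosDef) (hM : ∀ a, (M a).PosSemidef)
    (htr : Tendsto (fun a => (P * M a).trace) l (𝓝 0)) : Tendsto M l (𝓝 0) := by
  obtain ⟨r, hr, hrP⟩ := hP.exists_pos_smul_one_le
  have hbound (a : ι) : (M a).trace ≤ (P * M a).trace / r := by
    have := trace_mul_le_trace_mul_of_le hrP (hM a)
    rw [smul_mul, Matrix.one_mul, trace_smul, smul_eq_mul] at this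
    rwa [le_div_iff₀ hr, mul_comm]
  refine tendsto_zero_of_trace_tendsto_zero hM
    (squeeze_zero (fun a => (hM a).trace_nonneg) hbound ?_)
  simpa using htr.div_const r

lemma trace_mul_le_of_le_sub {S P Q M : Matrix n n ℝ} {q r : ℝ} (hS : S ≤ P - Q)
    (hQ : q • 1 ≤ Q) (hP : P ≤ r • 1) (hq : 0 ≤ q) (hr : 0 < r) (hM : M.PosSemidef) :
    (S * M).trace ≤ (1 - q / r) * (P * M).trace := by
  have hSP := trace_mul_le_trace_mul_of_le hS hM
  have hqQ := trace_mul_le_trace_mul_of_le hQ hM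
  have hPr := trace_mul_le_trace_mul_of_le hP hM
  simp only [Matrix.sub_mul, trace_sub, smul_mul, Matrix.one_mul, trace_smul,
    smul_eq_mul] at hSP hqQ hPr
  have : q / r * (P * M).trace ≤ q * M.trace :=
    calc q / r * (P * M).trace ≤ q / r * (r * M.trace) := by gcongr
      _ = q * M.trace := by field_simp
  linarith

end DecidableEq

variable [Fintype ι]

def weightedConj [CommSemiring R] (p : ι → R) (A : ι → Matrix n n R) (M : Matrix n n R) :
    Matrix n n R :=
  ∑ i, p i • (A i * M * (A i)ᵀ)

lemma trace_mul_weightedConj [CommSemiring R] (p : ι → R) (A : ι → Matrix n n R)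
    (P M : Matrix n n R) :
    (P * weightedConj p A M).trace = (weightedConj p (fun i => (A i)ᵀ) P * M).trace := by
  simp only [weightedConj, transpose_transpose, mul_sum, sum_mul, trace_sum, mul_smul_comm,
    smul_mul_assoc, trace_smul]
  refine sum_congr rfl fun i _ => ?_
  rw [← Matrix.mul_assoc, ← Matrix.mul_assoc, trace_mul_comm, ← Matrix.mul_assoc,
    ← Matrix.mul_assoc]

lemma PosSemidef.weightedConj {p : ι → ℝ} (hp : ∀ i, 0 ≤ p i) (A : ι → Matrix n n ℝ)
    {M : Matrix n n ℝ} (hM : M.PosSemidef) : (weightedConj p A M).PosSemidef :=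
  posSemidef_sum _ fun i _ => by
    simpa [conjTranspose_eq_transpose_of_trivial] using
      (hM.mul_mul_conjTranspose_same (A i)).smul (hp i)

end Matrix

/-- if Σᵢ pᵢ AᵢᵀPAᵢ − P ≼ −Q with P, Q ≻ 0, then along the iteration
M_{t+1} = Σᵢ pᵢ Aᵢ M_t Aᵢᵀ from a psd M₀ one has
trace(P M_t) ≤ (1 − λ_min(Q)/λ_max(P))^t trace(P M₀), and M_t → 0. -/
theorem lyapunov_trace_decay (n k : ℕ) (hn : 0 < n)
    (A : Fin k → Matrix (Fin n) (Fin n) ℝ) (p : Fin k → ℝ)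
    (hp : (∀ i, 0 ≤ p i) ∧ ∑ i, p i = 1)
    (P Q : Matrix (Fin n) (Fin n) ℝ) (hP : P.PosDef) (hQ : Q.PosDef)
    (hLyap : ((-Q) - (∑ i, p i • ((A i)ᵀ * P * A i) - P)).PosSemidef)
    (M : ℕ → Matrix (Fin n) (Fin n) ℝ) (hM0 : (M 0).PosSemidef)
    (hMrec : ∀ t, M (t + 1) = ∑ i, p i • (A i * M t * (A i)ᵀ)) :
    (∀ t : ℕ, (P * M t).trace ≤
        (1 - (Finset.univ.inf' (Finset.univ_nonempty_iff.mpr ⟨⟨0, hn⟩⟩)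
                hQ.1.eigenvalues) /
             (Finset.univ.sup' (Finset.univ_nonempty_iff.mpr ⟨⟨0, hn⟩⟩)
                hP.1.eigenvalues)) ^ t * (P * M 0).trace) ∧
      Filter.Tendsto M Filter.atTop (nhds 0) := by
  have : Nonempty (Fin n) := ⟨⟨0, hn⟩⟩
  set qmin := univ.inf' (univ_nonempty_iff.mpr ⟨⟨0, hn⟩⟩) hQ.1.eigenvalues
  set pmax := univ.sup' (univ_nonempty_iff.mpr ⟨⟨0, hn⟩⟩) hP.1.eigenvalues
  set S := weightedConj p (fun i => (A i)ᵀ) P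
  have hMpsd (t : ℕ) : (M t).PosSemidef := by
    induction t with
    | zero => exact hM0
    | succ t ih => exact hMrec t ▸ ih.weightedConj hp.1 A
  have hSPQ : S ≤ P - Q := by
    have := le_iff.mpr hLyap
    simp only [S, weightedConj, transpose_transpose]
    rwa [sub_le_iff_le_add, neg_add_eq_sub] at this
  have hqmin : 0 < qmin := (lt_inf'_iff _).mpr fun i _ => hQ.eigenvalues_pos i
  have hpmax : 0 < pmax := (hP.eigenvalues_pos ⟨0, hn⟩).trans_le (le_sup' _ (mem_univ _))
  have hQ_ge : qmin • 1 ≤ Q := hQ.1.smul_one_le fun i => inf'_le _ (mem_univ i)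
  have hP_le : P ≤ pmax • 1 := hP.1.le_smul_one fun i => le_sup' _ (mem_univ i)
  have hS_nonneg : 0 ≤ S := nonneg_iff_posSemidef.mpr (hP.posSemidef.weightedConj hp.1 _)
  have hqp : qmin ≤ pmax := le_of_smul_one_le_smul_one <|
    hQ_ge.trans <| (le_sub_comm.mp hSPQ).trans <| (sub_le_self P hS_nonneg).trans hP_le
  set c := 1 - qmin / pmax
  have hc_nonneg : 0 ≤ c := sub_nonneg.mpr ((div_le_one hpmax).mpr hqp)
  have hc_lt_one : c < 1 := sub_lt_self 1 (div_pos hqmin hpmax)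
  have hstep (t : ℕ) : (P * M (t + 1)).trace ≤ c * (P * M t).trace := by
    rw [hMrec t]
    exact (trace_mul_weightedConj p A P (M t)).trans_le
      (trace_mul_le_of_le_sub hSPQ hQ_ge hP_le hqmin.le hpmax (hMpsd t))
  have hdecay (t : ℕ) : (P * M t).trace ≤ c ^ t * (P * M 0).trace :=
    le_geom (u := fun t => (P * M t).trace) hc_nonneg t fun k _ => hstep k
  refine ⟨hdecay, tendsto_zero_of_trace_mul_tendsto_zero hP hMpsd ?_⟩
  refine squeeze_zero (fun t => hP.posSemidef.trace_mul_nonneg (hMpsd t)) hdecay ?_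
  simpa using (tendsto_pow_atTop_nhds_zero_of_lt_one hc_nonneg hc_lt_one).mul_const _
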